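/- Let κ_i > 0, ρ ∈ (0,1), p_i ∈ (0,1], θ ∈ (0,1), and set κ̃_i = 1 + κ_i/ρ². If (1 − θ)² κ_i ≤ 4 ρ² p_i (p_i − (1 − θ)) for all i = 1, …, n, then θ ≥ max_i ( 1 − 2 p_i / (1 + √κ̃_i) ). -/
import Mathlib


/-- From the serial-sampling step size conditions of the strongly convex
SPDHG analysis, the lower bound on the achievable linear rate `θ`:
if `(1 − θ)² κ_i ≤ 4 ρ² p_i (p_i − (1 − θ))` for all `i`, then
`θ ≥ 1 − 2 p_i / (1 + √κ̃_i)` for all `i` (i.e. `θ ≥ max_i (...)`),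
where `κ̃_i = 1 + κ_i/ρ²`. -/
theorem spdhg_serial_rate_lower_bound {n : ℕ} (κ p : Fin n → ℝ) (ρ θ : ℝ)
    (hκ : ∀ i, 0 < κ i) (hρ : ρ ∈ Set.Ioo (0 : ℝ) 1)
    (hp : ∀ i, p i ∈ Set.Ioc (0 : ℝ) 1) (hθ : θ ∈ Set.Ioo (0 : ℝ) 1)
    (h : ∀ i, (1 - θ) ^ 2 * κ i ≤ 4 * ρ ^ 2 * p i * (p i - (1 - θ))) :
    ∀ i, 1 - 2 * p i / (1 + Real.sqrt (1 + κ i / ρ ^ 2)) ≤ θ := by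
  intro i
  obtain ⟨hρ0, hρ1⟩ := hρ
  obtain ⟨hp0, hp1⟩ := hp i
  obtain ⟨hθ0, hθ1⟩ := hθ
  have hκi := hκ i
  have hi := h i
  set s := Real.sqrt (1 + κ i / ρ ^ 2) with hs
  have hρ2 : (0:ℝ) < ρ ^ 2 := by positivity
  have hs2 : s ^ 2 = 1 + κ i / ρ ^ 2 := Real.sq_sqrt (by positivity)
  have hs1 : 1 < s := by
    nlinarith [Real.sqrt_nonneg (1 + κ i / ρ ^ 2), div_pos hκi hρ2]
  have hpos : (0:ℝ) < 1 + s := by linarith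
  have key : (1 - θ) * (1 + s) ≤ 2 * p i := by
    have hκeq : κ i = ρ ^ 2 * (s ^ 2 - 1) := by
      field_simp at hs2; nlinarith [hs2]
    by_contra hc
    push_neg at hc
    have h1 : 0 < (s - 1) * (1 - θ) + 2 * p i := by nlinarith
    have h2 : 0 < (1 - θ) * (1 + s) - 2 * p i := by linarith
    nlinarith [mul_pos hρ2 (mul_pos h1 h2), hi, hκeq]
  have : 1 - θ ≤ 2 * p i / (1 + s) := (le_div_iff₀ hpos).2 (by linarith [key])
  linarith
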